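/- For $b \in B^{k,\infty}$ define $\tilde e_0(b)_{ji} = b_{ji} - \delta_{i, c^{(e)}_{j-1}} + \delta_{i, c^{(e)}_j}$ and $\tilde f_0(b)_{ji} = b_{ji} - \delta_{i, c^{(f)}_j} + \delta_{i, c^{(f)}_{j-1}}$, where $c^{(e)}$ (resp. $c^{(f)}$) is the minimal (resp. maximal) $\preceq$-distinguished minimizer of $\Delta_b$ over $C$. Then $\tilde e_0$ and $\tilde f_0$ preserve $B^{k,\infty}$, and $\varphi_0(b) - \varepsilon_0(b) = -b_{1,1} + b_{k,n+1}$, where $\varepsilon_0(b) = -b_{k,n+1} - \Delta_b(c^{(e)})$ and $\varphi_0(b) = -b_{1,1} - \Delta_b(c^{(f)})$. -/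
import Mathlib


attribute [local instance] Classical.propDecidable

noncomputable section

/-- Validity of an index `(j,i)` of the arrays in `B^{k,∞}`. -/
def Bidx (n k j i : ℕ) : Prop := 1 ≤ j ∧ j ≤ k ∧ j ≤ i ∧ i ≤ j + (n + 1 - k)

/-- The crystal `B^{k,∞}`: integer arrays with zero row sums. -/
def BkInf (n k : ℕ) : Set (ℕ → ℕ → ℤ) :=
  {b | (∀ j i, ¬ Bidx n k j i → b j i = 0) ∧
    ∀ j, 1 ≤ j → j ≤ k → ∑ i ∈ Finset.Icc j (j + (n + 1 - k)), b j i = 0}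

/-- Membership in `C = {(c₀,…,c_k) : 1 = c₀ < c₁ < ⋯ < c_k ≤ n+1}`. -/
def IsC (n k : ℕ) (c : Fin (k + 1) → ℕ) : Prop :=
  c 0 = 1 ∧ StrictMono c ∧ c (Fin.last k) ≤ n + 1

/-- `Δ_b(c) = ∑_{j=1}^k ∑_{c_{j-1} < i < c_j} b_{ji}`. -/
def Delta (k : ℕ) (b : ℕ → ℕ → ℤ) (c : Fin (k + 1) → ℕ) : ℤ :=
  ∑ j : Fin k, ∑ i ∈ Finset.Ioo (c j.castSucc) (c j.succ), b ((j : ℕ) + 1) i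

/-- `ẽ₀(b)_{ji} = b_{ji} - δ_{i, c⁽ᵉ⁾_{j-1}} + δ_{i, c⁽ᵉ⁾_j}` (on the rows `1 ≤ j ≤ k`). -/
def eZero (k : ℕ) (ce : Fin (k + 1) → ℕ) (b : ℕ → ℕ → ℤ) : ℕ → ℕ → ℤ := fun j i =>
  if h : 1 ≤ j ∧ j ≤ k then
    b j i - (if i = ce ⟨j - 1, by omega⟩ then 1 else 0)
      + (if i = ce ⟨j, by omega⟩ then 1 else 0)
  else b j i

/-- `f̃₀(b)_{ji} = b_{ji} - δ_{i, c⁽ᶠ⁾_j} + δ_{i, c⁽ᶠ⁾_{j-1}}` (on the rows `1 ≤ j ≤ k`). -/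
def fZero (k : ℕ) (cf : Fin (k + 1) → ℕ) (b : ℕ → ℕ → ℤ) : ℕ → ℕ → ℤ := fun j i =>
  if h : 1 ≤ j ∧ j ≤ k then
    b j i - (if i = cf ⟨j, by omega⟩ then 1 else 0)
      + (if i = cf ⟨j - 1, by omega⟩ then 1 else 0)
  else b j i

lemma isC_bounds {n k : ℕ} {c : Fin (k + 1) → ℕ} (hc : IsC n k c)
    (t : ℕ) (ht : t ≤ k) : t + 1 ≤ c ⟨t, by omega⟩ ∧ c ⟨t, by omega⟩ + (k - t) ≤ n + 1 := by
  obtain ⟨h0, hm, hl⟩ := hc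
  have key : ∀ d : ℕ, ∀ a b : Fin (k + 1), (b : ℕ) = (a : ℕ) + d → c a + d ≤ c b := by
    intro d
    induction d with
    | zero => intro a b hab; have h : a = b := Fin.ext (by omega); rw [h]; omega
    | succ d ih =>
      intro a b hab
      have hb' : (a : ℕ) + d < k + 1 := by omega
      have h1 := ih a ⟨(a : ℕ) + d, hb'⟩ rfl
      have h2 : c ⟨(a : ℕ) + d, hb'⟩ < c b := hm (by simp [Fin.lt_def]; omega)
      omega
  have h1 : c 0 + t ≤ c ⟨t, by omega⟩ := key t 0 ⟨t, by omega⟩ (by simp)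
  have h2 : c ⟨t, by omega⟩ + (k - t) ≤ c (Fin.last k) :=
    key (k - t) ⟨t, by omega⟩ (Fin.last k) (by simp [Fin.last]; omega)
  constructor <;> omega

lemma gen_mem {n k : ℕ} (hkn : k ≤ n) {b : ℕ → ℕ → ℤ} (hb : b ∈ BkInf n k)
    (g : ℕ → ℕ → ℤ)
    (hg1 : ∀ j i, ¬ (1 ≤ j ∧ j ≤ k) → g j i = b j i)
    (hg2 : ∀ j, 1 ≤ j → j ≤ k → ∃ p q, p ∈ Finset.Icc j (j + (n + 1 - k)) ∧
      q ∈ Finset.Icc j (j + (n + 1 - k)) ∧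
      ∀ i, g j i = b j i - (if i = p then 1 else 0) + (if i = q then 1 else 0)) :
    g ∈ BkInf n k := by
  obtain ⟨hb1, hb2⟩ := hb
  constructor
  · intro j i hji
    by_cases hj : 1 ≤ j ∧ j ≤ k
    · obtain ⟨p, q, hp, hq, hgi⟩ := hg2 j hj.1 hj.2
      simp only [Finset.mem_Icc] at hp hq
      have hb0 : b j i = 0 := hb1 j i hji
      have hi : i < j ∨ j + (n + 1 - k) < i := by
        by_contra h; push_neg at h
        exact hji ⟨hj.1, hj.2, by omega, by omega⟩
      have hip : i ≠ p := by omega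
      have hiq : i ≠ q := by omega
      rw [hgi i, if_neg hip, if_neg hiq, hb0]; ring
    · rw [hg1 j i hj]; exact hb1 j i hji
  · intro j hj1 hj2
    obtain ⟨p, q, hp, hq, hgi⟩ := hg2 j hj1 hj2
    have : ∑ i ∈ Finset.Icc j (j + (n + 1 - k)), g j i =
        ∑ i ∈ Finset.Icc j (j + (n + 1 - k)),
          (b j i - (if i = p then 1 else 0) + (if i = q then 1 else 0)) :=
      Finset.sum_congr rfl fun i _ => hgi i
    rw [this, Finset.sum_add_distrib, Finset.sum_sub_distrib,
      Finset.sum_ite_eq' _ p (fun _ => (1 : ℤ)),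
      Finset.sum_ite_eq' _ q (fun _ => (1 : ℤ)),
      if_pos hp, if_pos hq, hb2 j hj1 hj2]
    ring

/-- with `c⁽ᵉ⁾` (resp. `c⁽ᶠ⁾`) the minimal (resp. maximal)
`≼`-distinguished minimizer of `Δ_b` over `C`, the operators `ẽ₀` and `f̃₀`
preserve `B^{k,∞}`, and the weight formula
`φ₀(b) - ε₀(b) = -b_{1,1} + b_{k,n+1}` holds, where
`ε₀(b) = -b_{k,n+1} - Δ_b(c⁽ᵉ⁾)` and `φ₀(b) = -b_{1,1} - Δ_b(c⁽ᶠ⁾)`. -/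
theorem stmt16 (n k : ℕ) (hk : 1 ≤ k) (hkn : k ≤ n)
    (b : ℕ → ℕ → ℤ) (hb : b ∈ BkInf n k)
    (ce cf : Fin (k + 1) → ℕ) (hce : IsC n k ce) (hcf : IsC n k cf)
    (hmine : ∀ c, IsC n k c →
      ((∀ j, ce j ≤ c j) → Delta k b ce ≤ Delta k b c) ∧
      (¬ (∀ j, ce j ≤ c j) → Delta k b ce < Delta k b c))
    (hminf : ∀ c, IsC n k c →
      ((∀ j, c j ≤ cf j) → Delta k b cf ≤ Delta k b c) ∧
      (¬ (∀ j, c j ≤ cf j) → Delta k b cf < Delta k b c)) :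
    eZero k ce b ∈ BkInf n k ∧ fZero k cf b ∈ BkInf n k ∧
    (-(b 1 1) - Delta k b cf) - (-(b k (n + 1)) - Delta k b ce) =
      -(b 1 1) + b k (n + 1) := by
  
  have hDle1 : Delta k b ce ≤ Delta k b cf := by
    rcases hmine cf hcf with ⟨h1, h2⟩
    by_cases h : ∀ j, ce j ≤ cf j
    · exact h1 h
    · exact le_of_lt (h2 h)
  have hDle2 : Delta k b cf ≤ Delta k b ce := by
    rcases hminf ce hce with ⟨h1, h2⟩
    by_cases h : ∀ j, ce j ≤ cf j
    · exact h1 h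
    · exact le_of_lt (h2 h)
  have hDeq : Delta k b ce = Delta k b cf := le_antisymm hDle1 hDle2
  have hkn1 : k ≤ n + 1 := by omega
  refine ⟨?_, ?_, by omega⟩
  · apply gen_mem hkn hb
    · intro j i hj; simp [eZero, hj]
    · intro j hj1 hj2
      refine ⟨ce ⟨j - 1, by omega⟩, ce ⟨j, by omega⟩, ?_, ?_, ?_⟩
      · obtain ⟨ha, hb'⟩ := isC_bounds hce (j - 1) (by omega)
        simp only [Finset.mem_Icc]; omega
      · obtain ⟨ha, hb'⟩ := isC_bounds hce j (by omega)
        simp only [Finset.mem_Icc]; omega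
      · intro i; simp [eZero, hj1, hj2]
  · apply gen_mem hkn hb
    · intro j i hj; simp [fZero, hj]
    · intro j hj1 hj2
      refine ⟨cf ⟨j, by omega⟩, cf ⟨j - 1, by omega⟩, ?_, ?_, ?_⟩
      · obtain ⟨ha, hb'⟩ := isC_bounds hcf j (by omega)
        simp only [Finset.mem_Icc]; omega
      · obtain ⟨ha, hb'⟩ := isC_bounds hcf (j - 1) (by omega)
        simp only [Finset.mem_Icc]; omega
      · intro i; simp [fZero, hj1, hj2]
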